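/- Let $H$ be a cocommutative Hopf algebra over a field $F$. For an $H$-module $M$, let $\mathrm{Fin}(M)$ denote the largest $H$-submodule of $M$ that is a union (sum) of finite-dimensional $H$-submodules. Then for any $H$-modules $M, N$, one has $\mathrm{Fin}(M \otimes N) = \mathrm{Fin}(M) \otimes \mathrm{Fin}(N)$ as submodules of $M \otimes N$; in other words, $\mathrm{Fin}$ is a monoidal functor on $H$-modules. -/

import Mathlib

open TensorProduct

variable (F : Type*) [Field F] (H : Type*) [Ring H] [HopfAlgebra F H]

/-- The action of `h ∈ H` on `M ⊗[F] N` via the comultiplication of `H`. -/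
noncomputable def hopfTensorAction (M N : Type*) [AddCommGroup M] [Module F M] [Module H M]
    [IsScalarTower F H M] [SMulCommClass H F M]
    [AddCommGroup N] [Module F N] [Module H N]
    [IsScalarTower F H N] [SMulCommClass H F N] :
    H →ₗ[F] (M ⊗[F] N) →ₗ[F] M ⊗[F] N :=
  (TensorProduct.homTensorHomMap (RingHom.id F) M N M N).comp
    ((TensorProduct.map (Algebra.lsmul F F M).toLinearMap
        (Algebra.lsmul F F N).toLinearMap).comp Coalgebra.comul)

/-- `Fin M`: the largest `H`-submodule of `M` which is a union of finite-dimensional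
`H`-submodules, i.e. the sum of all finite-dimensional `H`-submodules. -/
noncomputable def finPart (M : Type*) [AddCommGroup M] [Module F M] [Module H M]
    [IsScalarTower F H M] : Submodule H M :=
  sSup {p : Submodule H M | FiniteDimensional F (p.restrictScalars F)}

/-!
For `V ⊆ M ⊗ N` let `rightSupport V ⊆ N` be the span of the slices `(g ⊗ id) v` (`v ∈ V`,
`g ∈ M^*`) and `leftSupport V ⊆ M` the mirror notion. Over a field
`V ⊆ leftSupport V ⊗ rightSupport V`, and both supports are finite-dimensional when `V` is.

If `V` is stable under the diagonal action, so is `rightSupport V`: the identity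
`1 ⊗ h = ∑ (S h₁ ⊗ 1) Δ h₂` writes the action of `h` on the right factor as the diagonal
action of `h₂` followed by the action of `S h₁` on the left factor, which a slice absorbs
into its functional. Cocommutativity makes the flip `M ⊗ N ≃ N ⊗ M` equivariant, so the same
holds for `leftSupport V`. Hence every finite-dimensional invariant `V` lies in
`Fin M ⊗ Fin N`; conversely `p ⊗ q` is invariant and finite-dimensional for
finite-dimensional submodules `p` and `q`.
-/

section Slice

variable {R M N : Type*} [CommSemiring R] [AddCommMonoid M] [Module R M]
  [AddCommMonoid N] [Module R N]

noncomputable def leftSlice (g : Module.Dual R M) : M ⊗[R] N →ₗ[R] N :=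
  (TensorProduct.lid R N).toLinearMap ∘ₗ g.rTensor N

@[simp]
lemma leftSlice_tmul (g : Module.Dual R M) (m : M) (n : N) :
    leftSlice g (m ⊗ₜ n) = g m • n := by
  simp [leftSlice]

lemma leftSlice_rTensor {M' : Type*} [AddCommMonoid M'] [Module R M'] (g : Module.Dual R M)
    (f : M' →ₗ[R] M) (w : M' ⊗[R] N) :
    leftSlice g (f.rTensor N w) = leftSlice (g ∘ₗ f) w := by
  induction w using TensorProduct.induction_on with
  | zero => simp
  | tmul m n => simp
  | add u v hu hv => simp only [map_add, hu, hv]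

lemma leftSlice_lTensor {N' : Type*} [AddCommMonoid N'] [Module R N'] (g : Module.Dual R M)
    (f : N →ₗ[R] N') (w : M ⊗[R] N) :
    leftSlice g (f.lTensor M w) = f (leftSlice g w) := by
  induction w using TensorProduct.induction_on with
  | zero => simp
  | tmul m n => simp
  | add u v hu hv => simp only [map_add, hu, hv]

end Slice

variable {F H}

section Support

variable {M N : Type*} [AddCommGroup M] [Module F M] [AddCommGroup N] [Module F N]
  (V : Submodule F (M ⊗[F] N))

noncomputable def rightSupport : Submodule F N :=
  ⨆ g : Module.Dual F M, V.map (leftSlice g)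

noncomputable def leftSupport : Submodule F M :=
  rightSupport (V.map (TensorProduct.comm F M N).toLinearMap)

lemma leftSlice_mem_rightSupport {v : M ⊗[F] N} (hv : v ∈ V) (g : Module.Dual F M) :
    leftSlice g v ∈ rightSupport V :=
  Submodule.mem_iSup_of_mem g (Submodule.mem_map_of_mem hv)

lemma rightSupport_le {Q : Submodule F N} (hV : V ≤ LinearMap.range (Q.subtype.lTensor M)) :
    rightSupport V ≤ Q := by
  refine iSup_le fun g => Submodule.map_le_iff_le_comap.mpr (hV.trans ?_)
  rintro _ ⟨w, rfl⟩
  simp only [Submodule.mem_comap, leftSlice_lTensor, Submodule.subtype_apply, SetLike.coe_mem]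

instance finiteDimensional_rightSupport [FiniteDimensional F V] :
    FiniteDimensional F (rightSupport V) := by
  obtain ⟨s, rfl⟩ : V.FG := Module.Finite.iff_fg.mp ‹_›
  obtain ⟨Q, _, hsQ⟩ :=
    exists_finite_submodule_right_of_setFinite (s : Set (M ⊗[F] N)) s.finite_toSet
  exact Submodule.finiteDimensional_of_le (rightSupport_le _ (Submodule.span_le.mpr hsQ))

instance finiteDimensional_leftSupport [FiniteDimensional F V] :
    FiniteDimensional F (leftSupport V) :=
  finiteDimensional_rightSupport _

lemma mem_range_lTensor_rightSupport {v : M ⊗[F] N} (hv : v ∈ V) :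
    v ∈ LinearMap.range ((rightSupport V).subtype.lTensor M) := by
  classical
  let b := Module.Basis.ofVectorSpace F M
  rw [← (equivFinsuppOfBasisLeft b).symm_apply_apply v, equivFinsuppOfBasisLeft_symm_apply]
  refine Submodule.finsuppSum_mem _ _ _ _ fun i _ =>
    ⟨b i ⊗ₜ ⟨equivFinsuppOfBasisLeft b v i, ?_⟩, rfl⟩
  rw [equivFinsuppOfBasisLeft_apply]
  exact leftSlice_mem_rightSupport V hv (b.coord i)

lemma mem_range_rTensor_leftSupport {v : M ⊗[F] N} (hv : v ∈ V) :
    v ∈ LinearMap.range ((leftSupport V).subtype.rTensor N) := by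
  obtain ⟨w, hw⟩ := mem_range_lTensor_rightSupport _
    (Submodule.mem_map_of_mem (f := (TensorProduct.comm F M N).toLinearMap) hv)
  exact ⟨TensorProduct.comm F N _ w, (TensorProduct.comm F M N).injective <|
    (LinearMap.congr_fun (LinearMap.comm_comp_rTensor_comp_comm_eq _) w).trans hw⟩

lemma range_rTensor_inf_range_lTensor_le (P : Submodule F M) (Q : Submodule F N) :
    LinearMap.range (P.subtype.rTensor N) ⊓ LinearMap.range (Q.subtype.lTensor M)
      ≤ LinearMap.range (mapIncl P Q) := by
  rintro _ ⟨⟨w, rfl⟩, hx⟩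
  have exact_lTensor (X : Type _) [AddCommGroup X] [Module F X] :=
    lTensor_exact X (LinearMap.exact_subtype_mkQ Q) Q.mkQ_surjective
  have hw : Q.mkQ.lTensor P w = 0 := by
    refine Module.Flat.rTensor_preserves_injective_linearMap P.subtype P.injective_subtype ?_
    rw [map_zero, ← (exact_lTensor M _).mpr hx]
    simp only [← LinearMap.comp_apply, LinearMap.lTensor_comp_rTensor,
      LinearMap.rTensor_comp_lTensor]
  obtain ⟨u, rfl⟩ := (exact_lTensor P w).mp hw
  exact ⟨u, by simp only [mapIncl, ← LinearMap.rTensor_comp_lTensor]; rfl⟩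

lemma le_range_mapIncl_leftSupport_rightSupport :
    V ≤ LinearMap.range (mapIncl (leftSupport V) (rightSupport V)) :=
  fun _ hv => range_rTensor_inf_range_lTensor_le _ _
    ⟨mem_range_rTensor_leftSupport V hv, mem_range_lTensor_rightSupport V hv⟩

end Support

open Coalgebra in
lemma HopfAlgebra.sum_antipode_tmul_one_mul_comul {R A : Type*} [CommSemiring R] [Semiring A]
    [HopfAlgebra R A] {a : A} {ι : Type*} (repr : Repr R a ι) :
    ∑ i ∈ repr.index, (antipode R (repr.left i) ⊗ₜ[R] (1 : A)) * comul (repr.right i)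
      = 1 ⊗ₜ a := by
  let Θ : A ⊗[R] (A ⊗[R] A) →ₗ[R] A ⊗[R] A :=
    (LinearMap.mul' R A ∘ₗ (antipode R).rTensor A).rTensor A ∘ₗ
      (TensorProduct.assoc R A A A).symm.toLinearMap
  have hΘ (b : A) (z : A ⊗[R] A) : Θ (b ⊗ₜ z) = (antipode R b ⊗ₜ 1) * z := by
    induction z using TensorProduct.induction_on <;> simp_all [Θ, tmul_add, mul_add]
  calc _ = Θ (comul.lTensor A (comul a)) := by simp [← repr.eq, hΘ, map_sum]
    _ = ((LinearMap.mul' R A ∘ₗ (antipode R).rTensor A) ∘ₗ comul).rTensor A (comul a) := by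
      rw [← coassoc_apply]; simp [Θ, LinearMap.rTensor_comp_apply]
    _ = 1 ⊗ₜ a := by
      rw [LinearMap.comp_assoc, HopfAlgebra.mul_antipode_rTensor_comul,
        LinearMap.rTensor_comp_apply, rTensor_counit_comul]
      simp

section Action

variable {M N : Type*} [AddCommGroup M] [Module F M] [Module H M]
  [IsScalarTower F H M] [SMulCommClass H F M]
  [AddCommGroup N] [Module F N] [Module H N]
  [IsScalarTower F H N] [SMulCommClass H F N]

variable (M N) in
noncomputable def externalTensorAction : H ⊗[F] H →ₐ[F] Module.End F (M ⊗[F] N) :=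
  Module.endTensorEndAlgHom.comp
    (Algebra.TensorProduct.map (Algebra.lsmul F F M) (Algebra.lsmul F F N))

@[simp]
lemma externalTensorAction_tmul_tmul (a b : H) (m : M) (n : N) :
    externalTensorAction M N (a ⊗ₜ[F] b) (m ⊗ₜ[F] n) = (a • m) ⊗ₜ (b • n) := rfl

lemma externalTensorAction_tmul_one (a : H) :
    externalTensorAction M N (a ⊗ₜ[F] 1) = (Algebra.lsmul F F M a).rTensor N :=
  TensorProduct.ext' fun m n => by simp

lemma externalTensorAction_one_tmul (b : H) :
    externalTensorAction M N (1 ⊗ₜ[F] b) = (Algebra.lsmul F F N b).lTensor M :=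
  TensorProduct.ext' fun m n => by simp

lemma hopfTensorAction_eq (h : H) :
    hopfTensorAction F H M N h = externalTensorAction M N (Coalgebra.comul h) := by
  change homTensorHomMap (RingHom.id F) M N M N
    (map (Algebra.lsmul F F M).toLinearMap (Algebra.lsmul F F N).toLinearMap
      (Coalgebra.comul h)) = _
  induction Coalgebra.comul (R := F) h using TensorProduct.induction_on with
  | zero => simp
  | tmul a b => exact TensorProduct.ext' fun m n => rfl
  | add x y hx hy => simp only [map_add, hx, hy]

lemma smul_mem_rightSupport {V : Submodule F (M ⊗[F] N)}
    (hV : ∀ h : H, ∀ v ∈ V, hopfTensorAction F H M N h v ∈ V) (h : H) {x : N}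
    (hx : x ∈ rightSupport V) : h • x ∈ rightSupport V := by
  refine (iSup_le fun g => ?_ :
    rightSupport V ≤ (rightSupport V).comap (Algebra.lsmul F F N h)) hx
  rintro _ ⟨v, hv, rfl⟩
  rw [Submodule.mem_comap, ← leftSlice_lTensor, ← externalTensorAction_one_tmul,
    ← HopfAlgebra.sum_antipode_tmul_one_mul_comul (Coalgebra.Repr.arbitrary F h), map_sum,
    LinearMap.sum_apply, map_sum]
  refine Submodule.sum_mem _ fun i _ => ?_
  rw [map_mul, Module.End.mul_apply, externalTensorAction_tmul_one, leftSlice_rTensor,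
    ← hopfTensorAction_eq]
  exact leftSlice_mem_rightSupport V (hV _ v hv) _

lemma comm_externalTensorAction (z : H ⊗[F] H) (w : M ⊗[F] N) :
    TensorProduct.comm F M N (externalTensorAction M N z w)
      = externalTensorAction N M (TensorProduct.comm F H H z) (TensorProduct.comm F M N w) := by
  induction z using TensorProduct.induction_on with
  | zero => simp
  | add x y hx hy => simp only [map_add, LinearMap.add_apply, hx, hy]
  | tmul a b =>
    induction w using TensorProduct.induction_on with
    | zero => simp
    | tmul m n => simp
    | add x y hx hy => simp only [map_add, hx, hy]

lemma comm_hopfTensorAction [Coalgebra.IsCocomm F H] (h : H) (w : M ⊗[F] N) :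
    TensorProduct.comm F M N (hopfTensorAction F H M N h w)
      = hopfTensorAction F H N M h (TensorProduct.comm F M N w) := by
  rw [hopfTensorAction_eq, comm_externalTensorAction, Coalgebra.comm_comul, hopfTensorAction_eq]

lemma smul_mem_leftSupport [Coalgebra.IsCocomm F H] {V : Submodule F (M ⊗[F] N)}
    (hV : ∀ h : H, ∀ v ∈ V, hopfTensorAction F H M N h v ∈ V) (h : H) {x : M}
    (hx : x ∈ leftSupport V) : h • x ∈ leftSupport V := by
  refine smul_mem_rightSupport (fun h => ?_) h hx
  rintro _ ⟨v, hv, rfl⟩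
  exact ⟨_, hV h v hv, comm_hopfTensorAction h v⟩

end Action

section FinPart

variable {M N : Type*} [AddCommGroup M] [Module F M] [Module H M] [IsScalarTower F H M]

lemma le_finPart {P : Submodule F M} [FiniteDimensional F P]
    (hP : ∀ h : H, ∀ x ∈ P, h • x ∈ P) : P ≤ (finPart F H M).restrictScalars F :=
  le_sSup (α := Submodule H M) (a := { P with smul_mem' := hP }) ‹FiniteDimensional F P›

variable [SMulCommClass H F M] [AddCommGroup N] [Module F N] [Module H N]
  [IsScalarTower F H N] [SMulCommClass H F N]

lemma externalTensorAction_mem_map₂ {p : Submodule H M} {q : Submodule H N} (z : H ⊗[F] H)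
    {w : M ⊗[F] N} (hw : w ∈ (p.restrictScalars F).map₂ (mk F M N) (q.restrictScalars F)) :
    externalTensorAction M N z w ∈
      (p.restrictScalars F).map₂ (mk F M N) (q.restrictScalars F) := by
  set S := (p.restrictScalars F).map₂ (mk F M N) (q.restrictScalars F)
  suffices hS : S ≤ S.comap (externalTensorAction M N z) from hS hw
  refine Submodule.map₂_le.mpr fun m hm n hn => Submodule.mem_comap.mpr ?_
  induction z using TensorProduct.induction_on with
  | zero => simp
  | tmul a b => exact Submodule.apply_mem_map₂ _ (p.smul_mem a hm) (q.smul_mem b hn)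
  | add x y hx hy => rw [map_add, LinearMap.add_apply]; exact add_mem hx hy

lemma range_mapIncl_finPart_le :
    LinearMap.range (mapIncl ((finPart F H M).restrictScalars F)
        ((finPart F H N).restrictScalars F))
      ≤ sSup {p : Submodule F (M ⊗[F] N) |
          (∀ h : H, ∀ v ∈ p, hopfTensorAction F H M N h v ∈ p) ∧ FiniteDimensional F p} := by
  rw [range_mapIncl, finPart, finPart, Submodule.restrictScalars_sSup,
    Submodule.restrictScalars_sSup, sSup_image, sSup_image]
  simp only [Submodule.map₂_iSup_left, Submodule.map₂_iSup_right]
  refine iSup₂_le fun p hp => iSup₂_le fun q hq =>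
    le_sSup ⟨fun h v hv => ?_, ?_⟩
  · rw [hopfTensorAction_eq]
    exact externalTensorAction_mem_map₂ _ hv
  · have : FiniteDimensional F (p.restrictScalars F) := hp
    have : FiniteDimensional F (q.restrictScalars F) := hq
    rw [← range_mapIncl]
    infer_instance

end FinPart

/-- For a cocommutative Hopf algebra `H`, `Fin (M ⊗ N) = Fin M ⊗ Fin N`: the sum of all
finite-dimensional subspaces of `M ⊗ N` invariant under the comultiplication action of `H`
equals the image of `Fin M ⊗ Fin N` in `M ⊗ N`.  In other words `Fin` is monoidal. -/
theorem finPart_tensor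
    (hcocomm : (TensorProduct.comm F H H).toLinearMap.comp Coalgebra.comul
        = (Coalgebra.comul : H →ₗ[F] H ⊗[F] H))
    (M N : Type*) [AddCommGroup M] [Module F M] [Module H M]
    [IsScalarTower F H M] [SMulCommClass H F M]
    [AddCommGroup N] [Module F N] [Module H N]
    [IsScalarTower F H N] [SMulCommClass H F N] :
    sSup {p : Submodule F (M ⊗[F] N) |
        (∀ h : H, ∀ v ∈ p, hopfTensorAction F H M N h v ∈ p) ∧ FiniteDimensional F p}
      = LinearMap.range
          (TensorProduct.mapIncl ((finPart F H M).restrictScalars F)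
            ((finPart F H N).restrictScalars F)) := by
  have : Coalgebra.IsCocomm F H := ⟨hcocomm⟩
  refine le_antisymm (sSup_le ?_) range_mapIncl_finPart_le
  rintro V ⟨hV, _⟩
  exact (le_range_mapIncl_leftSupport_rightSupport V).trans <| range_mapIncl_mono
    (le_finPart (smul_mem_leftSupport hV)) (le_finPart (smul_mem_rightSupport hV))
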